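/- Strong subsets absorb 0-extensions: let C ⊆ D be finite sets of vertices of a simple graph G with C ≼ D, let X ⊆ C, and suppose (X,Z) is a 0-extension with Z ⊆ D. Then Z ⊆ C. -/

import Mathlib

/-- The number of edges of `G` with both endpoints in the finite set `s`. -/
noncomputable def eCount {V : Type*} (G : SimpleGraph V) (s : Finset V) : ℕ :=
  {e : Sym2 V | e ∈ G.edgeSet ∧ ∀ v ∈ e, v ∈ s}.ncard

/-- The rational predimension `δ_r(s) = |s| - r·e(s)`. -/
noncomputable def pdimQ {V : Type*} (G : SimpleGraph V) (r : ℚ) (s : Finset V) : ℚ :=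
  (s.card : ℚ) - r * (eCount G s : ℚ)

/-- `A ≼ B`: `A ⊆ B` and `δ_r(B₀) > δ_r(A)` for every `B₀` with `A ⊊ B₀ ⊆ B`. -/
def Strong {V : Type*} (G : SimpleGraph V) (r : ℚ) (A B : Finset V) : Prop :=
  A ⊆ B ∧ ∀ B₀ : Finset V, A ⊂ B₀ → B₀ ⊆ B → pdimQ G r A < pdimQ G r B₀

/-- `(X,Z)` is a minimal pair: `X ⊆ Z`, `X ⋠ Z`, but `X ≼ Z₀` for every
`Z₀` with `X ⊆ Z₀ ⊊ Z`. -/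
def MinPair {V : Type*} (G : SimpleGraph V) (r : ℚ) (X Z : Finset V) : Prop :=
  X ⊆ Z ∧ ¬ Strong G r X Z ∧ ∀ Z₀ : Finset V, X ⊆ Z₀ → Z₀ ⊂ Z → Strong G r X Z₀

/-- `(X,Z)` is a `0`-extension: there is a chain `X = X₀ ⊆ … ⊆ X_k = Z` in
which each `(X_i, X_{i+1})` is a minimal pair with `δ_r(X_{i+1}) = δ_r(X_i)`. -/
def ZeroExt {V : Type*} (G : SimpleGraph V) (r : ℚ) (X Z : Finset V) : Prop :=
  ∃ (k : ℕ) (f : ℕ → Finset V), f 0 = X ∧ f k = Z ∧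
    ∀ i < k, MinPair G r (f i) (f (i + 1)) ∧ pdimQ G r (f (i + 1)) = pdimQ G r (f i)

/-!
Since `e` is supermodular, `δ_r` is submodular for `r ≥ 0`. If `(X, Z)` is a minimal pair with
`δ_r(Z) ≤ δ_r(X)`, `X ⊆ C ≼ D` and `Z ⊆ D`, then `X ≼ Z ∩ C` (or `Z ∩ C = Z`) gives
`δ_r(X) ≤ δ_r(Z ∩ C)`, so submodularity yields
`δ_r(Z ∪ C) ≤ δ_r(Z) + δ_r(C) - δ_r(Z ∩ C) ≤ δ_r(C)`, and strongness of `C` in `D` forces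
`Z ∪ C = C`. A `0`-extension is a chain of such pairs, absorbed one step at a time.
-/

open Finset

section

variable {V : Type*} {G : SimpleGraph V} {r : ℚ}

lemma eCount_eq_ncard (G : SimpleGraph V) (s : Finset V) :
    eCount G s = (G.edgeSet ∩ (s : Set V).sym2).ncard := by
  unfold eCount
  congr 1
  ext e
  induction e using Sym2.ind with
  | _ a b => simp

lemma eCount_add_eCount_le [DecidableEq V] (G : SimpleGraph V) (A B : Finset V) :
    eCount G A + eCount G B ≤ eCount G (A ∪ B) + eCount G (A ∩ B) := by
  simp only [eCount_eq_ncard]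
  have hfin (s : Finset V) : (G.edgeSet ∩ (s : Set V).sym2).Finite :=
    (s.sym2.finite_toSet.subset (by simp)).subset Set.inter_subset_right
  rw [← Set.ncard_union_add_ncard_inter _ _ (hfin A) (hfin B), coe_inter, Set.sym2_inter,
    ← Set.inter_inter_distrib_left]
  refine Nat.add_le_add_right (Set.ncard_le_ncard ?_ (hfin _)) _
  rintro e (⟨he, hA⟩ | ⟨he, hB⟩)
  · exact ⟨he, Set.mem_sym2_iff_subset.2 ((Set.mem_sym2_iff_subset.1 hA).trans (by simp))⟩
  · exact ⟨he, Set.mem_sym2_iff_subset.2 ((Set.mem_sym2_iff_subset.1 hB).trans (by simp))⟩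

lemma pdimQ_union_add_pdimQ_inter_le [DecidableEq V] (hr : 0 ≤ r) (A B : Finset V) :
    pdimQ G r (A ∪ B) + pdimQ G r (A ∩ B) ≤ pdimQ G r A + pdimQ G r B := by
  have hcard : ((A ∪ B).card : ℚ) + (A ∩ B).card = A.card + B.card := by
    exact_mod_cast card_union_add_card_inter A B
  have hedges : (eCount G A : ℚ) + eCount G B ≤ eCount G (A ∪ B) + eCount G (A ∩ B) := by
    exact_mod_cast eCount_add_eCount_le G A B
  unfold pdimQ
  nlinarith

lemma Strong.pdimQ_le {A B : Finset V} (h : Strong G r A B) : pdimQ G r A ≤ pdimQ G r B := by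
  rcases h.1.eq_or_ssubset with rfl | hAB
  · exact le_rfl
  · exact (h.2 B hAB subset_rfl).le

lemma Strong.eq_of_pdimQ_le {A B B₀ : Finset V} (h : Strong G r A B) (hAB₀ : A ⊆ B₀)
    (hB₀B : B₀ ⊆ B) (hle : pdimQ G r B₀ ≤ pdimQ G r A) : B₀ = A := by
  by_contra hne
  exact (h.2 B₀ (hAB₀.ssubset_of_ne (Ne.symm hne)) hB₀B).not_ge hle

lemma MinPair.subset_of_strong [DecidableEq V] (hr : 0 ≤ r) {X Z C D : Finset V}
    (hXZ : MinPair G r X Z) (hle : pdimQ G r Z ≤ pdimQ G r X) (hCD : Strong G r C D)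
    (hXC : X ⊆ C) (hZD : Z ⊆ D) : Z ⊆ C := by
  rcases (inter_subset_left : Z ∩ C ⊆ Z).eq_or_ssubset with hZC | hssub
  · exact inter_eq_left.1 hZC
  have hX_le_inter := (hXZ.2.2 _ (subset_inter hXZ.1 hXC) hssub).pdimQ_le
  have hsub := pdimQ_union_add_pdimQ_inter_le (G := G) hr Z C
  have hunion : Z ∪ C = C :=
    hCD.eq_of_pdimQ_le subset_union_right (union_subset hZD hCD.1) (by linarith)
  exact union_eq_right.1 hunion

lemma ZeroExt.subset_of_strong (hr : 0 ≤ r) {X Z C D : Finset V} (hXZ : ZeroExt G r X Z)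
    (hCD : Strong G r C D) (hXC : X ⊆ C) (hZD : Z ⊆ D) : Z ⊆ C := by
  classical
  obtain ⟨k, f, rfl, rfl, hsteps⟩ := hXZ
  induction k with
  | zero => exact hXC
  | succ k ih =>
    obtain ⟨hmin, heq⟩ := hsteps k k.lt_succ_self
    have hfk : f k ⊆ C :=
      ih (fun i hi => hsteps i (hi.trans k.lt_succ_self)) (hmin.1.trans hZD)
    exact hmin.subset_of_strong hr heq.le hCD hfk hZD

end

theorem strong_absorbs_zeroExt_general {V : Type*} (G : SimpleGraph V) (r : ℚ)
    (hr0 : 0 < r) (C D X Z : Finset V)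
    (hstrong : Strong G r C D) (hXC : X ⊆ C)
    (hZ : ZeroExt G r X Z) (hZD : Z ⊆ D) :
    Z ⊆ C :=
  hZ.subset_of_strong hr0.le hstrong hXC hZD

/-- Strong subsets absorb `0`-extensions. -/
theorem strong_absorbs_zeroExt {V : Type*} (G : SimpleGraph V) (r : ℚ)
    (hr0 : 0 < r) (hr1 : r < 1) (C D X Z : Finset V)
    (hCD : C ⊆ D) (hstrong : Strong G r C D) (hXC : X ⊆ C)
    (hZ : ZeroExt G r X Z) (hZD : Z ⊆ D) :
    Z ⊆ C :=
  strong_absorbs_zeroExt_general G r hr0 C D X Z hstrong hXC hZ hZD
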